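/- arXiv:math/0401011 — 5 statements merged into one kernel-verified Lean document; each statement's English description precedes it below -/
import Mathlib

section
/- For any family (Z_i)_{i ∈ I} of elements of 𝒴, the pointwise join W defined by W(t) = ⋁_{i ∈ I} Z_i(t) (the smallest partial order containing ⋃_{i ∈ I} Z_i(t), i.e. the reflexive–transitive closure of the union) is again left-continuous; in particular W ∈ 𝒴. -/
open Set NNReal ENNReal

/-- A "partial order" on `M`: a reflexive and transitive (not necessarily
antisymmetric) relation, identified with a subset of `M × M`. -/
def IsPO {M : Type*} (V : Set (M × M)) : Prop :=
  (∀ j : M, (j, j) ∈ V) ∧ ∀ j k l : M, (j, k) ∈ V → (k, l) ∈ V → (j, l) ∈ V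

/-- The diagonal relation `D`. -/
def diagRel (M : Type*) : Set (M × M) := {p : M × M | p.1 = p.2}

/-- The smallest partial order containing `S` (reflexive-transitive closure). -/
def poGen {M : Type*} (S : Set (M × M)) : Set (M × M) :=
  ⋂₀ {V : Set (M × M) | IsPO V ∧ S ⊆ V}

/-- The join of two partial orders: the smallest partial order containing their union. -/
def poJoin {M : Type*} (V W : Set (M × M)) : Set (M × M) := poGen (V ∪ W)

/-- Membership in `𝒴`: maps `Y : [0,∞) → {partial orders on M}` with `Y 0 = D`,
increasing, and left-continuous. -/
def MemY {M : Type*} (Y : ℝ≥0 → Set (M × M)) : Prop :=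
  (∀ t : ℝ≥0, IsPO (Y t)) ∧ Y 0 = diagRel M ∧
    (∀ s t : ℝ≥0, s ≤ t → Y s ⊆ Y t) ∧
    ∀ t : ℝ≥0, 0 < t → Y t = ⋃ s ∈ Set.Iio t, Y s

/-- The pointwise join on `𝒴`. -/
def joinY {M : Type*} (Y Z : ℝ≥0 → Set (M × M)) : ℝ≥0 → Set (M × M) :=
  fun t => poJoin (Y t) (Z t)

/-- The pointwise join of a family of order processes. -/
def joinFam {M : Type*} {ι : Type*} (Z : ι → ℝ≥0 → Set (M × M)) : ℝ≥0 → Set (M × M) :=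
  fun t => poGen (⋃ i, Z i t)

lemma isPO_poGen' {M : Type*} (S : Set (M × M)) : IsPO (poGen S) := by
  constructor
  · intro j
    intro V hV
    exact hV.1.1 j
  · intro j k l hjk hkl V hV
    exact hV.1.2 j k l (hjk V hV) (hkl V hV)

lemma subset_poGen' {M : Type*} (S : Set (M × M)) : S ⊆ poGen S := by
  intro p hp V hV
  exact hV.2 hp

lemma poGen_subset' {M : Type*} {S V : Set (M × M)} (hV : IsPO V) (hSV : S ⊆ V) :
    poGen S ⊆ V := fun _ hp => hp V ⟨hV, hSV⟩

lemma poGen_mono' {M : Type*} {S T : Set (M × M)} (h : S ⊆ T) : poGen S ⊆ poGen T :=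
  poGen_subset' (isPO_poGen' T) (h.trans (subset_poGen' T))

lemma mem_poGen_iff' {M : Type*} {S : Set (M × M)} {a b : M} :
    (a, b) ∈ poGen S ↔ Relation.ReflTransGen (fun x y => (x, y) ∈ S) a b := by
  constructor
  · intro h
    refine poGen_subset' (V := {p : M × M | Relation.ReflTransGen (fun x y => (x, y) ∈ S) p.1 p.2})
      ?_ ?_ h
    · exact ⟨fun j => Relation.ReflTransGen.refl,
        fun j k l hjk hkl => Relation.ReflTransGen.trans hjk hkl⟩
    · intro p hp
      exact Relation.ReflTransGen.single hp
  · intro h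
    induction h with
    | refl => exact (isPO_poGen' S).1 a
    | tail _ hcd ih =>
      exact (isPO_poGen' S).2 _ _ _ ih (subset_poGen' S hcd)

/-- The pointwise join of an arbitrary family of elements of `𝒴` is
left-continuous again; in particular it belongs to `𝒴`. -/
theorem joinFam_leftContinuous {M : Type*} [Countable M] [Infinite M] {ι : Type*}
    (Z : ι → ℝ≥0 → Set (M × M)) (hZ : ∀ i, MemY (Z i)) :
    (∀ t : ℝ≥0, 0 < t → joinFam Z t = ⋃ s ∈ Set.Iio t, joinFam Z s) ∧
      MemY (joinFam Z) := by
  have hmono : ∀ s t : ℝ≥0, s ≤ t → joinFam Z s ⊆ joinFam Z t := by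
    intro s t hst
    apply poGen_mono'
    exact Set.iUnion_mono fun i => (hZ i).2.2.1 s t hst
  have hlc : ∀ t : ℝ≥0, 0 < t → joinFam Z t = ⋃ s ∈ Set.Iio t, joinFam Z s := by
    intro t ht
    apply Set.Subset.antisymm
    · rintro ⟨a, b⟩ hab
      rw [joinFam, mem_poGen_iff'] at hab
      have : ∃ s : ℝ≥0, s < t ∧ (a, b) ∈ joinFam Z s := by
        induction hab with
        | refl => exact ⟨0, ht, (isPO_poGen' _).1 a⟩
        | @tail c d _ hcd ih =>
          obtain ⟨s₁, hs₁, hmem⟩ := ih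
          obtain ⟨i, hci⟩ := Set.mem_iUnion.mp hcd
          rw [(hZ i).2.2.2 t ht] at hci
          simp only [Set.mem_iUnion, Set.mem_Iio] at hci
          obtain ⟨s₂, hs₂, hci⟩ := hci
          refine ⟨max s₁ s₂, max_lt hs₁ hs₂, ?_⟩
          have h1 : (a, c) ∈ joinFam Z (max s₁ s₂) :=
            hmono s₁ _ (le_max_left _ _) hmem
          have h2 : (c, d) ∈ joinFam Z (max s₁ s₂) :=
            subset_poGen' _ (Set.mem_iUnion.mpr ⟨i, (hZ i).2.2.1 s₂ _ (le_max_right _ _) hci⟩)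
          exact (isPO_poGen' _).2 a c d h1 h2
      obtain ⟨s, hs, hmem⟩ := this
      exact Set.mem_iUnion₂.mpr ⟨s, hs, hmem⟩
    · intro p hp
      obtain ⟨s, hs, hmem⟩ := Set.mem_iUnion₂.mp hp
      exact hmono s t (le_of_lt hs) hmem
  refine ⟨hlc, fun t => isPO_poGen' _, ?_, hmono, hlc⟩
  apply Set.Subset.antisymm
  · apply poGen_subset'
    · exact ⟨fun j => rfl, fun j k l hjk hkl => hjk.trans hkl⟩
    · intro p hp
      obtain ⟨i, hi⟩ := Set.mem_iUnion.mp hp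
      rw [(hZ i).2.1] at hi
      exact hi
  · intro p hp
    rcases p with ⟨a, b⟩
    obtain rfl : a = b := hp
    exact (isPO_poGen' _).1 a
end

section
/- Let I be a nonempty left-hereditary sub-semigroup of 𝒵 and let Z ∈ 𝒵 satisfy Z ≤ ⋁_{Y ∈ I} Y. Then for every ε > 0 the delayed process Z_{-ε} belongs to I, where Z_{-ε}(t) = Z(t - ε) for t > ε and Z_{-ε}(t) = D for t ≤ ε. -/
open Set NNReal ENNReal

/-- The support of a partial order `V`. -/
def suppV {M : Type*} (V : Set (M × M)) : Set M :=
  {j : M | ∃ k : M, k ≠ j ∧ ((j, k) ∈ V ∨ (k, j) ∈ V)}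

/-- The support of an order process `Y ∈ 𝒴`. -/
def suppY {M : Type*} (Y : ℝ≥0 → Set (M × M)) : Set M := ⋃ t : ℝ≥0, suppV (Y t)

/-- Membership in `𝒵`: elements of `𝒴` with finite support. -/
def MemZ {M : Type*} (Y : ℝ≥0 → Set (M × M)) : Prop := MemY Y ∧ (suppY Y).Finite

/-- The order on `𝒴`: `Y ≤ Z` iff `Y ∨ Z = Z`. -/
def leY {M : Type*} (Y Z : ℝ≥0 → Set (M × M)) : Prop := joinY Y Z = Z

/-- A sub-semigroup of `𝒵`. -/
def IsSubsemigroupZ {M : Type*} (I : Set (ℝ≥0 → Set (M × M))) : Prop :=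
  (∀ Y ∈ I, MemZ Y) ∧ ∀ Y ∈ I, ∀ Z ∈ I, joinY Y Z ∈ I

/-- Left-hereditary sub-semigroups. -/
def LeftHereditary {M : Type*} (I : Set (ℝ≥0 → Set (M × M))) : Prop :=
  ∀ Z₁ Z₂ : ℝ≥0 → Set (M × M), MemZ Z₁ → Z₂ ∈ I → leY Z₁ Z₂ → Z₁ ∈ I

/-- The pointwise join of a set of order processes. -/
def joinSetY {M : Type*} (I : Set (ℝ≥0 → Set (M × M))) : ℝ≥0 → Set (M × M) :=
  fun t => poGen (⋃ Y ∈ I, Y t)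

/-- The delayed process `Z₋ε` (`ℝ≥0` has truncated subtraction, so
`Z₋ε t = Z (t - ε)` equals `Z 0 = D` for `t ≤ ε`). -/
def shiftY {M : Type*} (Z : ℝ≥0 → Set (M × M)) (ε : ℝ≥0) : ℝ≥0 → Set (M × M) :=
  fun t => Z (t - ε)

/-!
Since `I` is nonempty and closed under `∨`, the union `⋃_{Y ∈ I} Y t` is already a partial order,
so every pair related by `Z` at time `t` is related by a single member of `I` at time `t`. Only
finitely many off-diagonal pairs occur in `Z`; for each pair `p` with entry time `τ p` pick a
member of `I` relating `p` at time `τ p + ε`, and join these finitely many members into one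
`W ∈ I`. Then `Z₋ε ≤ W`, and `Z₋ε ∈ 𝒵`, so `Z₋ε ∈ I` by left-heredity. The delay `ε > 0` is what
makes `τ p + ε` a time at which `p` is already in `Z`: the infimum `τ p` itself need not be one.
-/

namespace OrderProcess

variable {M : Type*}

section Closure

lemma isPO_poGen (S : Set (M × M)) : IsPO (poGen S) :=
  ⟨fun j _ hV => hV.1.1 j, fun j k l hjk hkl V hV => hV.1.2 j k l (hjk V hV) (hkl V hV)⟩

lemma subset_poGen (S : Set (M × M)) : S ⊆ poGen S :=
  fun _ hp _ hV => hV.2 hp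

lemma poGen_subset {S V : Set (M × M)} (hV : IsPO V) (h : S ⊆ V) : poGen S ⊆ V :=
  fun _ hp => hp V ⟨hV, h⟩

lemma poGen_eq_self {V : Set (M × M)} (hV : IsPO V) : poGen V = V :=
  (poGen_subset hV subset_rfl).antisymm (subset_poGen V)

lemma left_subset_joinY (Y W : ℝ≥0 → Set (M × M)) (t : ℝ≥0) : Y t ⊆ joinY Y W t :=
  subset_union_left.trans (subset_poGen _)

lemma right_subset_joinY (Y W : ℝ≥0 → Set (M × M)) (t : ℝ≥0) : W t ⊆ joinY Y W t :=
  subset_union_right.trans (subset_poGen _)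

lemma leY_iff_forall_subset {Y W : ℝ≥0 → Set (M × M)} (hW : ∀ t, IsPO (W t)) :
    leY Y W ↔ ∀ t, Y t ⊆ W t := by
  refine ⟨fun h t => h ▸ left_subset_joinY Y W t, fun h => funext fun t => ?_⟩
  exact (poGen_subset (hW t) (union_subset (h t) subset_rfl)).antisymm (right_subset_joinY Y W t)

end Closure

section Semigroup

variable {I : Set (ℝ≥0 → Set (M × M))}

lemma isPO_biUnion (hne : I.Nonempty) (hI : IsSubsemigroupZ I) (t : ℝ≥0) :
    IsPO (⋃ Y ∈ I, Y t) := by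
  obtain ⟨Y₀, hY₀⟩ := hne
  refine ⟨fun j => mem_biUnion hY₀ ((hI.1 Y₀ hY₀).1.1 t |>.1 j), fun j k l hjk hkl => ?_⟩
  obtain ⟨Y, hY, hjk⟩ := mem_iUnion₂.1 hjk
  obtain ⟨W, hW, hkl⟩ := mem_iUnion₂.1 hkl
  exact mem_biUnion (hI.2 Y hY W hW) <| (isPO_poGen _).2 j k l
    (left_subset_joinY Y W t hjk) (right_subset_joinY Y W t hkl)

lemma joinSetY_eq_biUnion (hne : I.Nonempty) (hI : IsSubsemigroupZ I) (t : ℝ≥0) :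
    joinSetY I t = ⋃ Y ∈ I, Y t :=
  poGen_eq_self (isPO_biUnion hne hI t)

lemma exists_mem_forall_mem_of_finite (hne : I.Nonempty) (hI : IsSubsemigroupZ I)
    (f : M × M → ℝ≥0) {P : Set (M × M)} (hP : P.Finite) (h : ∀ p ∈ P, p ∈ ⋃ Y ∈ I, Y (f p)) :
    ∃ W ∈ I, ∀ p ∈ P, p ∈ W (f p) := by
  induction P, hP using Set.Finite.induction_on with
  | empty => exact hne.imp fun _ hY => ⟨hY, by simp⟩
  | @insert a s _ _ ih =>
    obtain ⟨W, hWI, hW⟩ := ih fun p hp => h p (mem_insert_of_mem _ hp)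
    obtain ⟨Y, hYI, hY⟩ := mem_iUnion₂.1 (h a (mem_insert _ _))
    refine ⟨joinY Y W, hI.2 Y hYI W hWI, ?_⟩
    rintro p (rfl | hp)
    · exact left_subset_joinY Y W _ hY
    · exact right_subset_joinY Y W _ (hW p hp)

end Semigroup

section Shift

variable {Z : ℝ≥0 → Set (M × M)}

lemma memY_shiftY (hZ : MemY Z) (ε : ℝ≥0) : MemY (shiftY Z ε) := by
  obtain ⟨hPO, h0, hmono, hcts⟩ := hZ
  refine ⟨fun t => hPO _, by simp [shiftY, h0], fun s t hst => hmono _ _ (tsub_le_tsub_right hst ε),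
    fun t ht => ?_⟩
  refine (iUnion₂_subset fun s hs => hmono _ _ (tsub_le_tsub_right (le_of_lt hs) ε)).antisymm' ?_
  rcases le_or_gt t ε with htε | hεt
  · intro q hq
    exact mem_biUnion ht (by simpa [shiftY, tsub_eq_zero_of_le htε] using hq)
  · change Z (t - ε) ⊆ _
    rw [hcts _ (tsub_pos_of_lt hεt)]
    refine iUnion₂_subset fun u hu => ?_
    have hut : u + ε ∈ Iio t := lt_tsub_iff_right.mp (mem_Iio.1 hu)
    simpa [shiftY] using subset_biUnion_of_mem (u := shiftY Z ε) hut

lemma suppY_shiftY_subset (ε : ℝ≥0) : suppY (shiftY Z ε) ⊆ suppY Z :=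
  iUnion_subset fun t => subset_iUnion (fun s => suppV (Z s)) (t - ε)

lemma memZ_shiftY (hZ : MemZ Z) (ε : ℝ≥0) : MemZ (shiftY Z ε) :=
  ⟨memY_shiftY hZ.1 ε, hZ.2.subset (suppY_shiftY_subset ε)⟩

lemma finite_offDiag_of_suppY (hZ : (suppY Z).Finite) :
    {p : M × M | p.1 ≠ p.2 ∧ ∃ t, p ∈ Z t}.Finite := by
  refine (hZ.prod hZ).subset ?_
  rintro ⟨j, k⟩ ⟨hjk, t, ht⟩
  exact ⟨mem_iUnion.2 ⟨t, k, Ne.symm hjk, Or.inl ht⟩, mem_iUnion.2 ⟨t, j, hjk, Or.inr ht⟩⟩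

noncomputable def entryTime (Z : ℝ≥0 → Set (M × M)) (p : M × M) : ℝ≥0 := sInf {t | p ∈ Z t}

lemma entryTime_le {p : M × M} {t : ℝ≥0} (h : p ∈ Z t) : entryTime Z p ≤ t :=
  csInf_le (OrderBot.bddBelow _) h

lemma mem_entryTime_add (hmono : ∀ s t, s ≤ t → Z s ⊆ Z t) {ε : ℝ≥0} (hε : 0 < ε)
    {p : M × M} {t : ℝ≥0} (h : p ∈ Z t) : p ∈ Z (entryTime Z p + ε) := by
  obtain ⟨s, hs, hsε⟩ := exists_lt_of_csInf_lt ⟨t, h⟩ (lt_add_of_pos_right (entryTime Z p) hε)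
  exact hmono _ _ hsε.le hs

lemma entryTime_add_le_of_mem_shiftY (h0 : Z 0 = diagRel M) {ε t : ℝ≥0} {p : M × M}
    (hp : p.1 ≠ p.2) (h : p ∈ shiftY Z ε t) : entryTime Z p + ε ≤ t := by
  have hεt : ε ≤ t := by
    by_contra! htε
    unfold shiftY at h
    rw [tsub_eq_zero_of_le htε.le, h0] at h
    exact hp h
  exact add_le_of_le_tsub_right_of_le hεt (entryTime_le h)

end Shift

end OrderProcess

open OrderProcess in
theorem shift_mem_of_le_join_general {M : Type*}
    (I : Set (ℝ≥0 → Set (M × M))) (hne : I.Nonempty)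
    (hI : IsSubsemigroupZ I) (hIh : LeftHereditary I)
    (Z : ℝ≥0 → Set (M × M)) (hZ : MemZ Z) (hle : leY Z (joinSetY I)) :
    ∀ ε : ℝ≥0, 0 < ε → shiftY Z ε ∈ I := by
  intro ε hε
  obtain ⟨-, h0, hmono, -⟩ := hZ.1
  have hZI : ∀ t, Z t ⊆ ⋃ Y ∈ I, Y t := fun t =>
    joinSetY_eq_biUnion hne hI t ▸ (leY_iff_forall_subset (fun t => isPO_poGen _)).1 hle t
  obtain ⟨W, hWI, hW⟩ := exists_mem_forall_mem_of_finite hne hI (fun p => entryTime Z p + ε)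
    (finite_offDiag_of_suppY hZ.2) fun p ⟨_, t, hpt⟩ =>
      hZI _ (mem_entryTime_add hmono hε hpt)
  obtain ⟨⟨hWPO, -, hWmono, -⟩, -⟩ := hI.1 W hWI
  refine hIh _ W (memZ_shiftY hZ ε) hWI ?_
  refine (leY_iff_forall_subset hWPO).2 fun t ⟨j, k⟩ hjk => ?_
  by_cases hd : j = k
  · exact hd ▸ (hWPO t).1 j
  · exact hWmono _ _ (entryTime_add_le_of_mem_shiftY h0 hd hjk) (hW _ ⟨hd, t - ε, hjk⟩)

/-- If `I` is a nonempty left-hereditary sub-semigroup of `𝒵` and `Z ∈ 𝒵` with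
`Z ≤ ⋁_{Y ∈ I} Y`, then `Z₋ε ∈ I` for every `ε > 0`. -/
theorem shift_mem_of_le_join {M : Type*} [Countable M] [Infinite M]
    (I : Set (ℝ≥0 → Set (M × M))) (hne : I.Nonempty)
    (hI : IsSubsemigroupZ I) (hIh : LeftHereditary I)
    (Z : ℝ≥0 → Set (M × M)) (hZ : MemZ Z) (hle : leY Z (joinSetY I)) :
    ∀ ε : ℝ≥0, 0 < ε → shiftY Z ε ∈ I :=
  shift_mem_of_le_join_general I hne hI hIh Z hZ hle
end

section
/- For every Y ∈ 𝒴, the switching-time function f_Y, defined on off-diagonal pairs by f_Y(j,k) := inf{t ∈ [0,∞) : (j,k) ∈ Y(t)} ∈ [0,∞] (with inf ∅ = ∞), satisfies the inequality f_Y(j,l) ≤ max(f_Y(j,k), f_Y(k,l)) for all pairwise distinct j, k, l ∈ M. -/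
open Set NNReal ENNReal

/-- The switching-time function `f_Y` with values in `[0,∞]` (`inf ∅ = ∞`). -/
noncomputable def fY {M : Type*} (Y : ℝ≥0 → Set (M × M)) (p : M × M) : ℝ≥0∞ :=
  ⨅ (s : ℝ≥0) (_ : p ∈ Y s), (s : ℝ≥0∞)

/-- The switching-time function of any `Y ∈ 𝒴` satisfies the ultrametric-type
inequality `f_Y(j,l) ≤ max (f_Y(j,k)) (f_Y(k,l))` for pairwise distinct `j,k,l`. -/
theorem fY_ultrametric {M : Type*} [Countable M] [Infinite M]
    (Y : ℝ≥0 → Set (M × M)) (hY : MemY Y) :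
    ∀ j k l : M, j ≠ k → k ≠ l → j ≠ l →
      fY Y (j, l) ≤ max (fY Y (j, k)) (fY Y (k, l)) := by
  obtain ⟨hPO, -, hmono, -⟩ := hY
  intro j k l _ _ _
  have key : ∀ s1 s2 : ℝ≥0, (j, k) ∈ Y s1 → (k, l) ∈ Y s2 →
      fY Y (j, l) ≤ max (s1 : ℝ≥0∞) s2 := by
    intro s1 s2 h1 h2
    have hjl : (j, l) ∈ Y (max s1 s2) :=
      (hPO (max s1 s2)).2 j k l (hmono s1 _ (le_max_left _ _) h1)
        (hmono s2 _ (le_max_right _ _) h2)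
    calc fY Y (j, l) ≤ ((max s1 s2 : ℝ≥0) : ℝ≥0∞) := by
          exact iInf₂_le (max s1 s2) hjl
      _ = max (s1 : ℝ≥0∞) s2 := by
          simp [ENNReal.coe_max]
  by_contra hcon
  push_neg at hcon
  rw [max_lt_iff] at hcon
  obtain ⟨h1, h2⟩ := hcon
  rw [fY] at h1 h2
  simp only [iInf_lt_iff] at h1 h2
  obtain ⟨s1, hs1, hlt1⟩ := h1
  obtain ⟨s2, hs2, hlt2⟩ := h2
  exact absurd (key s1 s2 hs1 hs2) (by simp [max_lt_iff, hlt1, hlt2, not_le, lt_iff_lt_of_le_iff_le])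
end

section
/- For every function f : (M×M)∖D → [0,∞] satisfying f(j,l) ≤ max(f(j,k), f(k,l)) for all pairwise distinct j, k, l ∈ M, there exists exactly one Y ∈ 𝒴 with f_Y = f; namely Y(t) = D ∪ {(j,k) : j ≠ k, f(j,k) < t}. Hence Y ↦ f_Y is a bijection from 𝒴 onto 𝒴̃ := {f : (M×M)∖D → [0,∞] : f(j,l) ≤ max(f(j,k), f(k,l)) for all pairwise distinct j,k,l}. -/
open Set NNReal ENNReal

/-- The off-diagonal pairs `(M × M) ∖ D`. -/
abbrev OffDiag (M : Type*) : Type _ := {p : M × M // p.1 ≠ p.2}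

/-- The set `𝒴̃` of ultrametric-type functions on off-diagonal pairs. -/
def tildeY (M : Type*) : Set (OffDiag M → ℝ≥0∞) :=
  {f | ∀ (j k l : M) (hjk : j ≠ k) (hkl : k ≠ l) (hjl : j ≠ l),
    f ⟨(j, l), hjl⟩ ≤ max (f ⟨(j, k), hjk⟩) (f ⟨(k, l), hkl⟩)}

/-- The switching-time function restricted to off-diagonal pairs. -/
noncomputable def fYo {M : Type*} (Y : ℝ≥0 → Set (M × M)) : OffDiag M → ℝ≥0∞ :=
  fun p => fY Y p.1

/-! Both directions rest on reading `f_Y` through its strict sublevel sets: for `Y ∈ 𝒴` and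
`j ≠ k`, left-continuity and `Y(0) = D` give `f_Y(j,k) < t ↔ (j,k) ∈ Y(t)`. Hence `Y` is
recovered from `f_Y` (injectivity), and transitivity of `Y(t)` is exactly the ultrametric-type
inequality for `f_Y`. Conversely the strict sublevel sets of any `f ∈ 𝒴̃` form an element of `𝒴`
whose switching-time function is `f`. -/

namespace ENNReal

lemma exists_coe_btwn_iff {a : ℝ≥0∞} {t : ℝ≥0} : (∃ s : ℝ≥0, a < s ∧ s < t) ↔ a < t := by
  refine ⟨fun ⟨s, has, hst⟩ => has.trans (mod_cast hst), fun h => ?_⟩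
  obtain ⟨s, has, hst⟩ := ENNReal.lt_iff_exists_nnreal_btwn.1 h
  exact ⟨s, has, mod_cast hst⟩

lemma le_of_forall_lt_coe_imp_lt_coe {a b : ℝ≥0∞} (h : ∀ t : ℝ≥0, b < t → a < t) : a ≤ b := by
  by_contra! hba
  obtain ⟨t, hbt, hta⟩ := ENNReal.lt_iff_exists_nnreal_btwn.1 hba
  exact (h t hbt).not_gt hta

lemma eq_of_forall_lt_coe_iff {a b : ℝ≥0∞} (h : ∀ t : ℝ≥0, a < t ↔ b < t) : a = b :=
  le_antisymm (le_of_forall_lt_coe_imp_lt_coe fun t => (h t).2)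
    (le_of_forall_lt_coe_imp_lt_coe fun t => (h t).1)

end ENNReal

section SwitchingTimes

variable {M : Type*}

lemma fY_lt_coe_iff {Y : ℝ≥0 → Set (M × M)} {p : M × M} {t : ℝ≥0} :
    fY Y p < t ↔ ∃ s < t, p ∈ Y s := by
  simp only [fY, iInf_lt_iff, exists_prop, ENNReal.coe_lt_coe]
  exact exists_congr fun s => and_comm

lemma MemY.fY_lt_coe_iff {Y : ℝ≥0 → Set (M × M)} (hY : MemY Y) {p : M × M} (hp : p.1 ≠ p.2)
    {t : ℝ≥0} : fY Y p < t ↔ p ∈ Y t := by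
  rw [_root_.fY_lt_coe_iff]
  rcases eq_zero_or_pos t with rfl | ht
  · simp only [_root_.not_lt_zero, false_and, exists_false, false_iff, hY.2.1]
    exact hp
  · rw [hY.2.2.2 t ht]
    simp only [mem_iUnion₂, mem_Iio, exists_prop]

lemma MemY.fYo_mem_tildeY {Y : ℝ≥0 → Set (M × M)} (hY : MemY Y) : fYo Y ∈ tildeY M := by
  intro j k l hjk hkl hjl
  refine ENNReal.le_of_forall_lt_coe_imp_lt_coe fun t ht => ?_
  have hjk_t : (j, k) ∈ Y t := (hY.fY_lt_coe_iff hjk).1 (le_max_left _ _ |>.trans_lt ht)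
  have hkl_t : (k, l) ∈ Y t := (hY.fY_lt_coe_iff hkl).1 (le_max_right _ _ |>.trans_lt ht)
  exact (hY.fY_lt_coe_iff hjl).2 ((hY.1 t).2 j k l hjk_t hkl_t)

def Yf (f : OffDiag M → ℝ≥0∞) : ℝ≥0 → Set (M × M) :=
  fun t => diagRel M ∪ {p : M × M | ∃ h : p.1 ≠ p.2, f ⟨p, h⟩ < (t : ℝ≥0∞)}

lemma mem_Yf_of_ne {f : OffDiag M → ℝ≥0∞} {p : M × M} (hp : p.1 ≠ p.2) {t : ℝ≥0} :
    p ∈ Yf f t ↔ f ⟨p, hp⟩ < t :=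
  ⟨fun h => h.elim (absurd · hp) fun ⟨_, h⟩ => h, fun h => Or.inr ⟨hp, h⟩⟩

lemma isPO_Yf {f : OffDiag M → ℝ≥0∞} (hf : f ∈ tildeY M) (t : ℝ≥0) : IsPO (Yf f t) := by
  refine ⟨fun j => Or.inl rfl, ?_⟩
  rintro j k l (hjk | ⟨hjk, hjk_t⟩) hkl
  · obtain rfl : j = k := hjk
    exact hkl
  rcases hkl with hkl | ⟨hkl, hkl_t⟩
  · obtain rfl : k = l := hkl
    exact Or.inr ⟨hjk, hjk_t⟩
  by_cases hjl : j = l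
  · exact Or.inl hjl
  · exact Or.inr ⟨hjl, (hf j k l hjk hkl hjl).trans_lt (max_lt hjk_t hkl_t)⟩

lemma memY_Yf {f : OffDiag M → ℝ≥0∞} (hf : f ∈ tildeY M) : MemY (Yf f) := by
  refine ⟨isPO_Yf hf, ?_, ?_, fun t _ => ?_⟩
  · simp [Yf]
  · rintro s t hst p (hp | ⟨hp, hps⟩)
    · exact Or.inl hp
    · exact Or.inr ⟨hp, hps.trans_le (mod_cast hst)⟩
  · ext p
    simp only [Yf, mem_iUnion₂, mem_Iio, mem_union, mem_ofPred_eq, exists_prop]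
    constructor
    · rintro (hp | ⟨hp, hpt⟩)
      · exact ⟨0, by positivity, Or.inl hp⟩
      · obtain ⟨s, hps, hst⟩ := ENNReal.exists_coe_btwn_iff.2 hpt
        exact ⟨s, mod_cast hst, Or.inr ⟨hp, hps⟩⟩
    · rintro ⟨s, hst, hp | ⟨hp, hps⟩⟩
      · exact Or.inl hp
      · exact Or.inr ⟨hp, hps.trans (mod_cast hst)⟩

lemma fYo_Yf (f : OffDiag M → ℝ≥0∞) : fYo (Yf f) = f := by
  funext ⟨p, hp⟩
  refine ENNReal.eq_of_forall_lt_coe_iff fun t => ?_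
  simp only [fYo, fY_lt_coe_iff, mem_Yf_of_ne hp]
  rw [← ENNReal.exists_coe_btwn_iff]
  exact exists_congr fun s => and_comm

lemma MemY.eq_Yf {Y : ℝ≥0 → Set (M × M)} (hY : MemY Y) : Y = Yf (fYo Y) := by
  funext t
  ext ⟨j, k⟩
  by_cases hjk : j = k
  · subst hjk
    exact iff_of_true ((hY.1 t).1 j) (Or.inl rfl)
  · rw [mem_Yf_of_ne hjk]
    exact (hY.fY_lt_coe_iff hjk).symm

end SwitchingTimes

theorem fY_bijection_general {M : Type*} :
    (∀ f : OffDiag M → ℝ≥0∞, f ∈ tildeY M →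
      (MemY (fun t : ℝ≥0 =>
          diagRel M ∪ {p : M × M | ∃ h : p.1 ≠ p.2, f ⟨p, h⟩ < (t : ℝ≥0∞)}) ∧
        fYo (fun t : ℝ≥0 =>
          diagRel M ∪ {p : M × M | ∃ h : p.1 ≠ p.2, f ⟨p, h⟩ < (t : ℝ≥0∞)}) = f) ∧
      ∃! Y : ℝ≥0 → Set (M × M), MemY Y ∧ fYo Y = f) ∧
    Set.BijOn (fun Y : ℝ≥0 → Set (M × M) => fYo Y) {Y | MemY Y} (tildeY M) := by
  refine ⟨fun f hf => ⟨⟨memY_Yf hf, fYo_Yf f⟩, Yf f, ⟨memY_Yf hf, fYo_Yf f⟩, ?_⟩, ?_, ?_, ?_⟩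
  · rintro Y ⟨hY, rfl⟩
    exact hY.eq_Yf
  · exact fun _ hY => hY.fYo_mem_tildeY
  · intro Y₁ hY₁ Y₂ hY₂ h
    rw [MemY.eq_Yf hY₁, MemY.eq_Yf hY₂]
    exact congrArg Yf h
  · exact fun f hf => ⟨Yf f, memY_Yf hf, fYo_Yf f⟩

/-- Every `f ∈ 𝒴̃` has exactly one preimage under `Y ↦ f_Y`, namely
`Y(t) = D ∪ {(j,k) : j ≠ k, f(j,k) < t}`; hence `Y ↦ f_Y` is a bijection
from `𝒴` onto `𝒴̃`. -/
theorem fY_bijection {M : Type*} [Countable M] [Infinite M] :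
    (∀ f : OffDiag M → ℝ≥0∞, f ∈ tildeY M →
      (MemY (fun t : ℝ≥0 =>
          diagRel M ∪ {p : M × M | ∃ h : p.1 ≠ p.2, f ⟨p, h⟩ < (t : ℝ≥0∞)}) ∧
        fYo (fun t : ℝ≥0 =>
          diagRel M ∪ {p : M × M | ∃ h : p.1 ≠ p.2, f ⟨p, h⟩ < (t : ℝ≥0∞)}) = f) ∧
      ∃! Y : ℝ≥0 → Set (M × M), MemY Y ∧ fYo Y = f) ∧
    Set.BijOn (fun Y : ℝ≥0 → Set (M × M) => fYo Y) {Y | MemY Y} (tildeY M) :=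
  fY_bijection_general
end

section
/- The Borel σ-algebra of 𝒴̃ (with its compact metrizable subspace topology inherited from [0,∞]^{(M×M)∖D}) is generated by the family of closed sets Q̃_Z := {f ∈ 𝒴̃ : f(j,k) ≤ f_Z(j,k) for all j ≠ k}, where Z ranges over 𝒵. -/
open Set NNReal ENNReal

/-- `Q̃_Z`, as a subset of `𝒴̃`. -/
def Qtilde {M : Type*} (Z : ℝ≥0 → Set (M × M)) : Set (tildeY M) :=
  {f : tildeY M | ∀ p : OffDiag M, f.1 p ≤ fYo Z p}

section Aux

variable {M : Type*}

/-- The order process that puts `(j,k)` into the order at all times `> c`. -/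
def Zsingle (j k : M) (c : ℝ≥0) : ℝ≥0 → Set (M × M) :=
  fun t => if c < t then insert (j, k) (diagRel M) else diagRel M

lemma isPO_diagRel : IsPO (diagRel M) :=
  ⟨fun _ => rfl, fun _ _ _ h1 h2 => h1.trans h2⟩

lemma isPO_insert (j k : M) : IsPO (insert (j, k) (diagRel M)) := by
  constructor
  · intro a; exact Set.mem_insert_iff.mpr (Or.inr rfl)
  · rintro a b c (h1 | h1) (h2 | h2)
    · obtain ⟨ha, hb⟩ := Prod.mk.injEq .. ▸ h1
      obtain ⟨hb', hc⟩ := Prod.mk.injEq .. ▸ h2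
      exact Or.inl (by simp [ha, hc])
    · obtain ⟨ha, hb⟩ := Prod.mk.injEq .. ▸ h1
      have : b = c := h2
      exact Or.inl (by simp [ha, ← this, hb])
    · have : a = b := h1
      obtain ⟨hb, hc⟩ := Prod.mk.injEq .. ▸ h2
      exact Or.inl (by simp [this, hb, hc])
    · exact Or.inr ((h1 : a = b).trans (h2 : b = c))

lemma Zsingle_mono (j k : M) (c : ℝ≥0) {s t : ℝ≥0} (hst : s ≤ t) :
    Zsingle j k c s ⊆ Zsingle j k c t := by
  unfold Zsingle
  split_ifs with h1 h2 h2
  · exact subset_rfl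
  · exact absurd (h1.trans_le hst) h2
  · exact Set.subset_insert _ _
  · exact subset_rfl

lemma Zsingle_subset (j k : M) (c : ℝ≥0) (t : ℝ≥0) :
    Zsingle j k c t ⊆ insert (j, k) (diagRel M) := by
  unfold Zsingle; split
  · exact subset_rfl
  · exact Set.subset_insert _ _

lemma memZ_Zsingle (j k : M) (c : ℝ≥0) : MemZ (Zsingle j k c) := by
  refine ⟨⟨fun t => ?_, ?_, fun s t hst => Zsingle_mono j k c hst, fun t ht => ?_⟩, ?_⟩
  · unfold Zsingle; split
    · exact isPO_insert j k
    · exact isPO_diagRel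
  · simp [Zsingle]
  · by_cases hc : c < t
    · obtain ⟨s₀, hcs, hst⟩ := exists_between hc
      apply subset_antisymm
      · intro x hx
        refine Set.mem_biUnion (show s₀ ∈ Set.Iio t from hst) ?_
        simpa [Zsingle, if_pos hcs, if_pos hc] using hx
      · exact Set.iUnion₂_subset fun s hs => Zsingle_mono j k c hs.le
    · apply subset_antisymm
      · intro x hx
        refine Set.mem_biUnion (show (0 : ℝ≥0) ∈ Set.Iio t from ht) ?_
        simpa [Zsingle, if_neg hc, if_neg (show ¬ c < 0 by simp)] using hx
      · exact Set.iUnion₂_subset fun s hs => Zsingle_mono j k c hs.le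
  · refine Set.Finite.subset ((Set.finite_singleton k).insert j) ?_
    intro a ha
    obtain ⟨_, ⟨t, rfl⟩, b, hb, hab⟩ := ha
    rcases hab with h | h
    · rcases Zsingle_subset j k c t h with h' | h'
      · exact Or.inl (congrArg Prod.fst h')
      · exact absurd (h' : a = b).symm hb
    · rcases Zsingle_subset j k c t h with h' | h'
      · exact Or.inr (by simpa using congrArg Prod.snd h')
      · exact absurd (h' : b = a) hb

lemma fY_Zsingle_self {j k : M} (hjk : j ≠ k) (c : ℝ≥0) :
    fY (Zsingle j k c) (j, k) = c := by
  have hmem : ∀ s : ℝ≥0, (j, k) ∈ Zsingle j k c s ↔ c < s := by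
    intro s
    unfold Zsingle
    split_ifs with h
    · simp [h]
    · simp [h, diagRel, hjk]
  unfold fY
  simp only [hmem]
  apply le_antisymm
  · refine ENNReal.le_of_forall_pos_le_add fun ε hε _ => ?_
    refine iInf_le_of_le (c + ε) (iInf_le_of_le ?_ ?_)
    · exact lt_add_of_pos_right c hε
    · rw [ENNReal.coe_add]
  · exact le_iInf fun s => le_iInf fun hs => by exact_mod_cast hs.le

lemma fY_Zsingle_ne {j k : M} {p : M × M} (hp : p ≠ (j, k)) (hpd : p.1 ≠ p.2) (c : ℝ≥0) :
    fY (Zsingle j k c) p = ∞ := by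
  have h : ∀ s, p ∉ Zsingle j k c s := by
    intro s
    unfold Zsingle; split
    · intro hm
      rcases hm with h' | h'
      · exact hp h'
      · exact hpd h'
    · exact fun h' => hpd h'
  simp [fY, h]

lemma Qtilde_Zsingle (p : OffDiag M) (c : ℝ≥0) :
    Qtilde (Zsingle p.1.1 p.1.2 c) = {f : tildeY M | f.1 p ≤ (c : ℝ≥0∞)} := by
  ext f
  constructor
  · intro h
    have := h p
    rwa [fYo, show fY (Zsingle p.1.1 p.1.2 c) p.1 = (c : ℝ≥0∞) from fY_Zsingle_self p.2 c]
      at this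
  · intro h q
    by_cases hq : q = p
    · subst hq
      rw [fYo, show fY (Zsingle q.1.1 q.1.2 c) q.1 = (c : ℝ≥0∞) from fY_Zsingle_self q.2 c]
      exact h
    · have hne : q.1 ≠ (p.1.1, p.1.2) := fun h' => hq (Subtype.ext h')
      rw [fYo, fY_Zsingle_ne hne q.2]
      exact le_top

end Aux

/-- The Borel σ-algebra of `𝒴̃` is generated by the sets `Q̃_Z`, `Z ∈ 𝒵`. -/
theorem borel_generated_by_Qtilde {M : Type*} [Countable M] [Infinite M] :
    MeasurableSpace.generateFrom
        {S : Set (tildeY M) | ∃ Z : ℝ≥0 → Set (M × M), MemZ Z ∧ S = Qtilde Z}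
      = borel (tildeY M) := by
  have hb : (inferInstance : MeasurableSpace (tildeY M)) = borel (tildeY M) :=
    BorelSpace.measurable_eq
  rw [← hb]
  refine le_antisymm (MeasurableSpace.generateFrom_le ?_) ?_
  · rintro S ⟨Z, _, rfl⟩
    have hcl : IsClosed (Qtilde Z) := by
      have hQ : Qtilde Z = ⋂ p : OffDiag M,
          (fun f : tildeY M => f.1 p) ⁻¹' Set.Iic (fYo Z p) := by
        ext f; simp [Qtilde]
      rw [hQ]
      exact isClosed_iInter fun p =>
        IsClosed.preimage ((continuous_apply p).comp continuous_subtype_val) isClosed_Iic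
    exact hcl.measurableSet
  · letI mQ : MeasurableSpace (tildeY M) := MeasurableSpace.generateFrom
        {S : Set (tildeY M) | ∃ Z : ℝ≥0 → Set (M × M), MemZ Z ∧ S = Qtilde Z}
    show Subtype.instMeasurableSpace ≤ mQ
    have hval : @Measurable _ _ mQ _ (fun f : tildeY M => (f : OffDiag M → ℝ≥0∞)) := by
      rw [measurable_pi_iff]
      intro p
      apply measurable_of_Iic
      intro c
      rcases eq_or_ne c ∞ with rfl | hc
      · simp
      · have hpre : (fun f : tildeY M => f.1 p) ⁻¹' Set.Iic c
            = Qtilde (Zsingle p.1.1 p.1.2 c.toNNReal) := by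
          rw [Qtilde_Zsingle]
          ext f; simp [ENNReal.coe_toNNReal hc]
        rw [show (fun f : tildeY M => (f : OffDiag M → ℝ≥0∞) p) ⁻¹' Set.Iic c
            = Qtilde (Zsingle p.1.1 p.1.2 c.toNNReal) from hpre]
        exact MeasurableSpace.measurableSet_generateFrom
          ⟨_, memZ_Zsingle _ _ _, rfl⟩
    exact hval.comap_le
end
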